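/- Fix an integer K ≥ 1 and set 𝖽_j := sinh(a_j·E)·cosh((1−a_j)·E) for 1 ≤ j ≤ K. Then for every integer 1 ≤ i ≤ K−1, Π_{j=1}^{i} g_{j,K}(𝖽_j) = (sinh(ᾱ_i·E)/(i/K))^{i/K} · (cosh(ᾱ_i·E)/(1 − i/K))^{1 − i/K}, and moreover Π_{j=1}^{K} g_{j,K}(𝖽_j) = 1. -/

import Mathlib

open Real Finset

/-- The ground-state energy `E = log(1+√2) = arcsinh(1)`, so that `sinh E = 1`. -/
noncomputable def groundE : ℝ := Real.log (1 + Real.sqrt 2)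

/-- `ᾱ_i = (1/2)·(1 + arsinh(2i/K − 1)/E)` for `0 ≤ i ≤ K`. -/
noncomputable def abar (K i : ℕ) : ℝ :=
  (1 / 2) * (1 + Real.arsinh (2 * (i : ℝ) / (K : ℝ) - 1) / groundE)

/-- `a_i = ᾱ_i − ᾱ_{i−1}` for `1 ≤ i ≤ K`. -/
noncomputable def aseq (K i : ℕ) : ℝ := abar K i - abar K (i - 1)

/-- `φ(x) = x^x` (real power, with the convention `0^0 = 1`). -/
noncomputable def phiFun (x : ℝ) : ℝ := x ^ x

/-- The function `g_{j,K}` from the optimal Hamming-distance analysis. -/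
noncomputable def gFun (K j : ℕ) (x : ℝ) : ℝ :=
  (Real.sinh (aseq K j * groundE) ^ x * Real.cosh (aseq K j * groundE) ^ (1 - x) *
      phiFun (((j : ℝ) - 1) / (K : ℝ)) * phiFun (1 - ((j : ℝ) - 1) / (K : ℝ))) /
    (phiFun (x / 2 - 1 / (2 * (K : ℝ))) *
      phiFun (((j : ℝ) - 1) / (K : ℝ) - x / 2 + 1 / (2 * (K : ℝ))) *
      phiFun (x / 2 + 1 / (2 * (K : ℝ))) *
      phiFun (1 - ((j : ℝ) - 1) / (K : ℝ) - x / 2 - 1 / (2 * (K : ℝ))))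

/-- The optimal Hamming distances `𝖽_j = sinh(a_j·E)·cosh((1−a_j)·E)`, 1-based. -/
noncomputable def dNum (K j : ℕ) : ℝ :=
  Real.sinh (aseq K j * groundE) * Real.cosh ((1 - aseq K j) * groundE)

/-! Put `x = ᾱ_{j-1}E`, `y = a_jE`, `z = E − ᾱ_jE`, so that `x + y + z = E` and `sinh E = 1`.
The defining relation of `ᾱ` reads `sinh(ᾱ_iE)·cosh(E − ᾱ_iE) = i/K`, and `𝖽_j = sinh y·cosh(x + z)`.
With these, the four arguments of `φ` in the denominator of `g_{j,K}(𝖽_j)` are the products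
`sinh x sinh y sinh z`, `sinh x cosh y cosh z`, `cosh x sinh y cosh z`, `cosh x cosh y sinh z`.
Expanding `φ` of a product and regrouping the powers by base turns `g_{j,K}(𝖽_j)` into
`G(j)/G(j−1)`, where `G(i) = sinhCoshRatio (ᾱ_iE) (i/K)` is the right-hand side of the first
claim. So the product telescopes, and `G(0) = G(K) = 1` because `0⁰ = 1` (and `0/0 = 0`). -/

lemma rpow_mul_self_pos {x : ℝ} (hx : 0 ≤ x) (c : ℝ) : 0 < x ^ (x * c) := by
  rcases hx.eq_or_lt with rfl | hx
  · simp
  · exact rpow_pos_of_pos hx _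

lemma phiFun_pos {x : ℝ} (hx : 0 ≤ x) : 0 < phiFun x := by
  simpa [phiFun] using rpow_mul_self_pos hx 1

lemma cosh_mul_sinh_eq_one_sub {a b : ℝ} (h : sinh (a + b) = 1) :
    cosh a * sinh b = 1 - sinh a * cosh b := by
  rw [sinh_add] at h
  linarith

noncomputable def sinhCoshPow (a b : ℝ) : ℝ :=
  sinh a ^ (sinh a * cosh b) * cosh a ^ (cosh a * sinh b)

noncomputable def sinhCoshRatio (a t : ℝ) : ℝ :=
  (sinh a / t) ^ t * (cosh a / (1 - t)) ^ (1 - t)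

lemma sinhCoshPow_pos {a : ℝ} (ha : 0 ≤ a) (b : ℝ) : 0 < sinhCoshPow a b :=
  mul_pos (rpow_mul_self_pos (sinh_nonneg_iff.mpr ha) _) (rpow_pos_of_pos (cosh_pos a) _)

lemma sinhCoshPow_mul_sinhCoshPow {a b : ℝ} (ha : 0 ≤ a) (hb : 0 ≤ b) :
    sinhCoshPow a b * sinhCoshPow b a =
      phiFun (sinh a * cosh b) * phiFun (cosh a * sinh b) := by
  have hsa := sinh_nonneg_iff.mpr ha
  have hsb := sinh_nonneg_iff.mpr hb
  unfold sinhCoshPow phiFun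
  rw [mul_rpow hsa (cosh_pos b).le, mul_rpow (cosh_pos a).le hsb, mul_comm (sinh b),
    mul_comm (cosh b) (sinh a)]
  ring

lemma sinhCoshRatio_eq_div {a b : ℝ} (ha : 0 ≤ a) (hb : 0 ≤ b) (h : sinh (a + b) = 1) :
    sinhCoshRatio a (sinh a * cosh b) =
      sinhCoshPow a b / (phiFun (sinh a * cosh b) * phiFun (cosh a * sinh b)) := by
  have hsa := sinh_nonneg_iff.mpr ha
  have hsb := sinh_nonneg_iff.mpr hb
  unfold sinhCoshRatio sinhCoshPow phiFun
  rw [← cosh_mul_sinh_eq_one_sub h, div_rpow hsa (by positivity),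
    div_rpow (cosh_pos a).le (by positivity)]
  ring

lemma sinhCoshPow_mul_sinhCoshRatio {a b : ℝ} (ha : 0 ≤ a) (hb : 0 ≤ b) (h : sinh (a + b) = 1) :
    sinhCoshPow b a * sinhCoshRatio a (sinh a * cosh b) = 1 := by
  have hφ₁ := phiFun_pos (mul_nonneg (sinh_nonneg_iff.mpr ha) (cosh_pos b).le)
  have hφ₂ := phiFun_pos (mul_nonneg (cosh_pos a).le (sinh_nonneg_iff.mpr hb))
  rw [sinhCoshRatio_eq_div ha hb h, mul_div_assoc', mul_comm, sinhCoshPow_mul_sinhCoshPow ha hb,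
    div_self (by positivity)]

lemma phiFun_sinh_cosh_prod {x y z : ℝ} (hx : 0 ≤ x) (hy : 0 ≤ y) (hz : 0 ≤ z) :
    phiFun (sinh x * sinh y * sinh z) * phiFun (sinh x * cosh y * cosh z) *
        phiFun (cosh x * sinh y * cosh z) * phiFun (cosh x * cosh y * sinh z) =
      sinhCoshPow x (y + z) * sinhCoshPow y (x + z) * sinhCoshPow z (x + y) := by
  have hsx := sinh_nonneg_iff.mpr hx
  have hsy := sinh_nonneg_iff.mpr hy
  have hsz := sinh_nonneg_iff.mpr hz
  have hcx := (cosh_pos x).le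
  have hcy := (cosh_pos y).le
  have hcz := (cosh_pos z).le
  -- each exponent on the right is the sum of the two arguments on the left containing its base
  have e₁ : sinh x * cosh (y + z) = sinh x * sinh y * sinh z + sinh x * cosh y * cosh z := by
    rw [cosh_add]; ring
  have e₂ : cosh x * sinh (y + z) = cosh x * sinh y * cosh z + cosh x * cosh y * sinh z := by
    rw [sinh_add]; ring
  have e₃ : sinh y * cosh (x + z) = sinh x * sinh y * sinh z + cosh x * sinh y * cosh z := by
    rw [cosh_add]; ring
  have e₄ : cosh y * sinh (x + z) = sinh x * cosh y * cosh z + cosh x * cosh y * sinh z := by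
    rw [sinh_add]; ring
  have e₅ : sinh z * cosh (x + y) = sinh x * sinh y * sinh z + cosh x * cosh y * sinh z := by
    rw [cosh_add]; ring
  have e₆ : cosh z * sinh (x + y) = sinh x * cosh y * cosh z + cosh x * sinh y * cosh z := by
    rw [sinh_add]; ring
  unfold sinhCoshPow phiFun
  rw [e₁, e₂, e₃, e₄, e₅, e₆, rpow_add_of_nonneg hsx (by positivity) (by positivity),
    rpow_add_of_nonneg hcx (by positivity) (by positivity),
    rpow_add_of_nonneg hsy (by positivity) (by positivity),
    rpow_add_of_nonneg hcy (by positivity) (by positivity),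
    rpow_add_of_nonneg hsz (by positivity) (by positivity),
    rpow_add_of_nonneg hcz (by positivity) (by positivity)]
  simp only [mul_rpow, hsx, hsy, hsz, hcx, hcy, hcz, mul_nonneg]
  ring

lemma gFun_shape_mul_sinhCoshRatio {x y z s t d h : ℝ} (hx : 0 ≤ x) (hy : 0 ≤ y) (hz : 0 ≤ z)
    (hE : sinh (x + y + z) = 1) (hs : sinh x * cosh (y + z) = s)
    (ht : sinh (x + y) * cosh z = t) (hd : sinh y * cosh (x + z) = d) (hh : h = (t - s) / 2) :
    sinh y ^ d * cosh y ^ (1 - d) * phiFun s * phiFun (1 - s) /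
        (phiFun (d / 2 - h) * phiFun (s - d / 2 + h) * phiFun (d / 2 + h) *
          phiFun (1 - s - d / 2 - h)) * sinhCoshRatio x s =
      sinhCoshRatio (x + y) t := by
  have hu : d / 2 - h = sinh x * sinh y * sinh z := by
    rw [hh, ← hs, ← ht, ← hd]; simp only [sinh_add, cosh_add]; ring
  have hv : s - d / 2 + h = sinh x * cosh y * cosh z := by
    rw [hh, ← hs, ← ht, ← hd]; simp only [sinh_add, cosh_add]; ring
  have hw : d / 2 + h = cosh x * sinh y * cosh z := by
    rw [hh, ← hs, ← ht, ← hd]; simp only [sinh_add, cosh_add]; ring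
  have hz' : 1 - s - d / 2 - h = cosh x * cosh y * sinh z := by
    rw [hh, ← hs, ← ht, ← hd, ← hE]; simp only [sinh_add, cosh_add]; ring
  have hxE : sinh (x + (y + z)) = 1 := by rwa [← add_assoc]
  have hyE : sinh (y + (x + z)) = 1 := by rwa [add_left_comm, ← add_assoc]
  have hdy : sinhCoshPow y (x + z) = sinh y ^ d * cosh y ^ (1 - d) := by
    rw [sinhCoshPow, cosh_mul_sinh_eq_one_sub hyE, hd]
  have hratio_x := sinhCoshRatio_eq_div hx (add_nonneg hy hz) hxE
  have hinv_z := sinhCoshPow_mul_sinhCoshRatio (add_nonneg hx hy) hz hE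
  rw [cosh_mul_sinh_eq_one_sub hxE, hs] at hratio_x
  rw [ht] at hinv_z
  have hs₀ : 0 ≤ s := hs ▸ mul_nonneg (sinh_nonneg_iff.mpr hx) (cosh_pos _).le
  have hs₁ : 0 ≤ 1 - s := by
    rw [← hs, ← cosh_mul_sinh_eq_one_sub hxE]
    exact mul_nonneg (cosh_pos x).le (sinh_nonneg_iff.mpr (add_nonneg hy hz))
  have hφs := phiFun_pos hs₀
  have hφs' := phiFun_pos hs₁
  have hPx := sinhCoshPow_pos hx (y + z)
  have hPy := sinhCoshPow_pos hy (x + z)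
  have hPz := sinhCoshPow_pos hz (x + y)
  rw [hu, hv, hw, hz', phiFun_sinh_cosh_prod hx hy hz, ← hdy, hratio_x,
    eq_comm, ← mul_left_cancel_iff_of_pos hPz, hinv_z]
  field_simp

lemma groundE_eq_arsinh_one : groundE = arsinh 1 := by
  norm_num [groundE, arsinh]

lemma groundE_pos : 0 < groundE := by
  rw [groundE_eq_arsinh_one]
  exact arsinh_pos_iff.mpr one_pos

lemma sinh_groundE : sinh groundE = 1 := by
  rw [groundE_eq_arsinh_one, sinh_arsinh]

lemma two_mul_abar_mul_groundE_sub (K i : ℕ) :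
    2 * (abar K i * groundE) - groundE = arsinh (2 * (i : ℝ) / K - 1) := by
  have := groundE_pos.ne'
  unfold abar
  field_simp
  ring

lemma abar_zero (K : ℕ) : abar K 0 = 0 := by
  simp [abar, ← groundE_eq_arsinh_one, groundE_pos.ne']

lemma abar_self {K : ℕ} (hK : K ≠ 0) : abar K K = 1 := by
  have hK' : (K : ℝ) ≠ 0 := Nat.cast_ne_zero.mpr hK
  rw [abar, mul_div_cancel_right₀ 2 hK', show (2 : ℝ) - 1 = 1 by norm_num, ← groundE_eq_arsinh_one,
    div_self groundE_pos.ne']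
  norm_num

lemma monotone_abar (K : ℕ) : Monotone (abar K) := by
  intro i j hij
  unfold abar
  gcongr
  exact groundE_pos.le

lemma sinh_mul_cosh_sub {E : ℝ} (hE : sinh E = 1) (A : ℝ) :
    sinh A * cosh (E - A) = (1 + sinh (2 * A - E)) / 2 := by
  rw [← hE, sinh_sub, cosh_sub, sinh_two_mul, cosh_two_mul, cosh_sq]
  ring

lemma sinh_abar_mul_cosh (K i : ℕ) :
    sinh (abar K i * groundE) * cosh (groundE - abar K i * groundE) = i / K := by
  rw [sinh_mul_cosh_sub sinh_groundE, two_mul_abar_mul_groundE_sub, sinh_arsinh]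
  ring

lemma gFun_dNum_mul_sinhCoshRatio {K j : ℕ} (hj : 1 ≤ j) (hjK : j ≤ K) :
    gFun K j (dNum K j) * sinhCoshRatio (abar K (j - 1) * groundE) ((j - 1 : ℕ) / K) =
      sinhCoshRatio (abar K j * groundE) (j / K) := by
  set E := groundE
  set B := abar K (j - 1) * E
  set A := abar K j * E
  have hE := groundE_pos.le
  have hB : 0 ≤ B := by
    simpa [abar_zero] using mul_le_mul_of_nonneg_right (monotone_abar K (Nat.zero_le (j - 1))) hE
  have hBA : B ≤ A := mul_le_mul_of_nonneg_right (monotone_abar K (Nat.sub_le j 1)) hE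
  have hAE : A ≤ E := by
    simpa [abar_self (by omega : K ≠ 0)] using mul_le_mul_of_nonneg_right (monotone_abar K hjK) hE
  have hy : aseq K j * E = A - B := by rw [aseq, sub_mul]
  have hcast : ((j - 1 : ℕ) : ℝ) = j - 1 := by rw [Nat.cast_sub hj, Nat.cast_one]
  have key := gFun_shape_mul_sinhCoshRatio (s := (j - 1) / K) (t := j / K) (d := dNum K j)
    (h := 1 / (2 * K)) hB (sub_nonneg.mpr hBA) (sub_nonneg.mpr hAE)
    (by rw [show B + (A - B) + (E - A) = E by ring]; exact sinh_groundE)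
    (by rw [show A - B + (E - A) = E - B by ring, sinh_abar_mul_cosh, hcast])
    (by rw [add_sub_cancel, sinh_abar_mul_cosh])
    (by rw [dNum, hy, show (1 - aseq K j) * E = B + (E - A) by rw [aseq]; ring])
    (by ring)
  rw [add_sub_cancel] at key
  rw [gFun, hy, hcast]
  exact key

lemma prod_gFun_dNum {K i : ℕ} (hiK : i ≤ K) :
    ∏ j ∈ Icc 1 i, gFun K j (dNum K j) = sinhCoshRatio (abar K i * groundE) (i / K) := by
  induction i with
  | zero => simp [abar_zero, sinhCoshRatio]
  | succ i ih =>
    rw [prod_Icc_succ_top (by omega), ih (by omega), mul_comm,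
      ← gFun_dNum_mul_sinhCoshRatio (by omega) hiK, Nat.add_sub_cancel]

/-- **Evolution Lemma**: for `1 ≤ i ≤ K−1`,
`Π_{j=1}^{i} g_{j,K}(𝖽_j) = (sinh(ᾱ_i·E)/(i/K))^{i/K} · (cosh(ᾱ_i·E)/(1−i/K))^{1−i/K}`,
and the full product `Π_{j=1}^{K} g_{j,K}(𝖽_j)` equals `1`. -/
theorem evolution_lemma (K : ℕ) (hK : 1 ≤ K) :
    (∀ i : ℕ, 1 ≤ i → i ≤ K - 1 →
      ∏ j ∈ Finset.Icc 1 i, gFun K j (dNum K j) =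
        (Real.sinh (abar K i * groundE) / ((i : ℝ) / (K : ℝ))) ^ ((i : ℝ) / (K : ℝ)) *
          (Real.cosh (abar K i * groundE) / (1 - (i : ℝ) / (K : ℝ))) ^
            (1 - (i : ℝ) / (K : ℝ))) ∧
    ∏ j ∈ Finset.Icc 1 K, gFun K j (dNum K j) = 1 := by
  refine ⟨fun i _ hi => prod_gFun_dNum (by omega), ?_⟩
  have hK' : (K : ℝ) ≠ 0 := Nat.cast_ne_zero.mpr (by omega)
  rw [prod_gFun_dNum le_rfl, abar_self (by omega), one_mul, div_self hK']
  simp [sinhCoshRatio, sinh_groundE]
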